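/- The image of s in 𝓡 = ℂ[s,A,B,C,D,E]/I_{sE} is not a zero divisor. -/

import Mathlib

/-!
A criterion of flatness type: `s` is a nonzerodivisor modulo `I = (g₁, …, gₖ)` as soon as every
relation among the `gᵢ` modulo `s` lifts to an actual syzygy. At `s = 0` the generators become
the 2×2 minors of `M₀ = [[A², B, D], [C, A², B² − D]]`, and their syzygies are generated by the
two rows of `M₀` (Hilbert–Burch): setting `D = 0` forces the first coefficient into `(B², D)`,
and what remains is a Koszul syzygy because the second minor is prime. The rows of `M₀` lift
to the rows of the full matrix, which are syzygies of its minors.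
-/

open MvPolynomial

/-- Variables: `s = X 0`, `A = X 1`, `B = X 2`, `C = X 3`, `D = X 4`, `E = X 5`. -/
noncomputable def n₁ : MvPolynomial (Fin 6) ℂ :=
  ((X 1) ^ 2 + (X 0) ^ 5 * (X 5) ^ 5) * (X 1) ^ 2 - X 2 * X 3

noncomputable def n₂ : MvPolynomial (Fin 6) ℂ :=
  ((X 1) ^ 2 + (X 0) ^ 5 * (X 5) ^ 5) * ((X 2) ^ 2 - X 4) - X 3 * X 4

noncomputable def n₃ : MvPolynomial (Fin 6) ℂ :=
  X 2 * ((X 2) ^ 2 - X 4) - (X 1) ^ 2 * X 4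

/-- The ideal generated by the three 2×2 minors of
`[[A² + s⁵E⁵, B, D], [C, A², B² − D]]`. -/
noncomputable def I_sE : Ideal (MvPolynomial (Fin 6) ℂ) :=
  Ideal.span {n₁, n₂, n₃}

open scoped nonZeroDivisors

theorem Ideal.Quotient.mk_mem_nonZeroDivisors_of_lift_syzygies {R ι : Type*} [CommRing R]
    [Fintype ι] {s : R} (hs : s ∈ R⁰) (g : ι → R)
    (hlift : ∀ a : ι → R, s ∣ ∑ i, a i * g i →
      ∃ b : ι → R, ∑ i, b i * g i = 0 ∧ ∀ i, s ∣ a i - b i) :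
    Ideal.Quotient.mk (Ideal.span (Set.range g)) s ∈ (R ⧸ Ideal.span (Set.range g))⁰ := by
  rw [mem_nonZeroDivisors_iff_right]
  intro x hx
  obtain ⟨f, rfl⟩ := Ideal.Quotient.mk_surjective x
  rw [← map_mul, Ideal.Quotient.eq_zero_iff_mem, Ideal.mem_span_range_iff_exists_fun] at hx
  rw [Ideal.Quotient.eq_zero_iff_mem, Ideal.mem_span_range_iff_exists_fun]
  obtain ⟨a, ha⟩ := hx
  obtain ⟨b, hb, hab⟩ := hlift a ⟨f, by rw [ha, mul_comm]⟩
  choose c hc using hab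
  refine ⟨c, (mul_cancel_left_mem_nonZeroDivisors hs).mp ?_⟩
  calc s * ∑ i, c i * g i = ∑ i, (a i - b i) * g i := by
        rw [Finset.mul_sum]; simp only [hc, mul_assoc]
    _ = s * f := by
        rw [mul_comm s f, ← ha]
        simp only [sub_mul, Finset.sum_sub_distrib, hb, sub_zero]

namespace MvPolynomial

variable {R σ : Type*} [CommRing R] [DecidableEq σ]

noncomputable def substZero (j : σ) : MvPolynomial σ R →ₐ[R] MvPolynomial σ R :=
  aeval (Function.update X j 0)

@[simp]
theorem substZero_X (i j : σ) :
    substZero j (X i : MvPolynomial σ R) = if i = j then 0 else X i := by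
  by_cases h : i = j <;> simp [substZero, h]

theorem X_dvd_sub_substZero (j : σ) (p : MvPolynomial σ R) : X j ∣ p - substZero j p := by
  have hmk : Ideal.Quotient.mkₐ R (Ideal.span {(X j : MvPolynomial σ R)}) =
      (Ideal.Quotient.mkₐ R _).comp (substZero j) := by
    ext i
    by_cases h : i = j
    · subst h
      simp
    · simp [h]
  rw [← Ideal.mem_span_singleton, ← Ideal.Quotient.eq]
  exact congr($hmk p)

end MvPolynomial

theorem Prime.exists_of_mul_add_mul_eq_zero {R : Type*} [CommRing R] [IsDomain R] {p q b c : R}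
    (hp : Prime p) (hpq : ¬ p ∣ q) (h : b * p + c * q = 0) : ∃ l, b = -(l * q) ∧ c = l * p := by
  have hcq : p ∣ c * q := ⟨-b, by linear_combination h⟩
  obtain ⟨l, hl⟩ := (hp.dvd_or_dvd hcq).resolve_right hpq
  refine ⟨l, ?_, by rw [hl, mul_comm]⟩
  have : p * (b + l * q) = 0 := by linear_combination h - q * hl
  linear_combination (mul_eq_zero.mp this).resolve_left hp.ne_zero

theorem not_dvd_of_map_eq_zero {R S F : Type*} [CommMonoidWithZero R] [CommMonoidWithZero S]
    [FunLike F R S] [MonoidWithZeroHomClass F R S] (f : F) {p q : R} (hp : f p = 0)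
    (hq : f q ≠ 0) : ¬ p ∣ q :=
  fun h => hq (zero_dvd_iff.mp (hp ▸ map_dvd f h))

namespace DeterminantalSE

local notation "R₆" => MvPolynomial (Fin 6) ℂ

noncomputable def m₁ : R₆ := X 1 ^ 4 - X 2 * X 3
noncomputable def m₂ : R₆ := X 1 ^ 2 * (X 2 ^ 2 - X 4) - X 3 * X 4
noncomputable def m₃ : R₆ := X 2 * (X 2 ^ 2 - X 4) - X 1 ^ 2 * X 4

theorem substZero_n₁ : substZero 0 n₁ = m₁ := by simp [n₁, m₁]; ring
theorem substZero_n₂ : substZero 0 n₂ = m₂ := by simp [n₂, m₂]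
theorem substZero_n₃ : substZero 0 n₃ = m₃ := by simp [n₃, m₃]

theorem prime_m₂ : Prime m₂ := by
  -- `C` becomes the polynomial variable; the coefficients are in `A, B, s, D, E = X 0, …, X 4`.
  let φ : R₆ ≃ₐ[ℂ] Polynomial (MvPolynomial (Fin 5) ℂ) :=
    (renameEquiv ℂ (Equiv.swap 3 0)).trans (finSuccEquiv ℂ 5)
  have hφ : ∀ i : Fin 5, i ≠ 2 → φ (X i.succ) = Polynomial.C (X i) := by
    intro i hi
    simp only [φ, AlgEquiv.trans_apply, renameEquiv_apply, rename_X]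
    rw [Equiv.swap_apply_of_ne_of_ne (by revert i; decide) (Fin.succ_ne_zero i),
      finSuccEquiv_X_succ]
  have hA : φ (X 1) = Polynomial.C (X 0) := hφ 0 (by decide)
  have hB : φ (X 2) = Polynomial.C (X 1) := hφ 1 (by decide)
  have hD : φ (X 4) = Polynomial.C (X 3) := hφ 3 (by decide)
  have hC : φ (X 3) = Polynomial.X := by simp [φ, finSuccEquiv_X_zero]
  have hm₂ : φ m₂ = Polynomial.C (-X 3) * Polynomial.X
      + Polynomial.C (X 0 ^ 2 * (X 1 ^ 2 - X 3)) := by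
    simp only [m₂, map_sub, map_mul, map_pow, hA, hB, hC, hD, map_neg]
    ring
  have hD_not_dvd : ¬ (X 3 : MvPolynomial (Fin 5) ℂ) ∣ X 0 ^ 2 * (X 1 ^ 2 - X 3) :=
    not_dvd_of_map_eq_zero (aeval (fun i : Fin 5 => if i = 3 then (0 : ℂ) else 1))
      (by simp) (by simp)
  rw [← UniqueFactorizationMonoid.irreducible_iff_prime, ← MulEquiv.irreducible_iff φ.toMulEquiv]
  change Irreducible (φ m₂)
  rw [hm₂]
  exact Polynomial.irreducible_C_mul_X_add_C (neg_ne_zero.mpr (X_ne_zero 3))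
    ((X_prime.irreducible.isRelPrime_iff_not_dvd.mpr hD_not_dvd).neg_left)

theorem not_m₂_dvd_m₃ : ¬ m₂ ∣ m₃ :=
  not_dvd_of_map_eq_zero (aeval (fun i : Fin 6 => if i = 2 then (1 : ℂ) else 0))
    (by simp [m₂]) (by simp [m₃])

theorem exists_eq_rows_of_syzygy {a b c : R₆} (h : a * m₁ + b * m₂ + c * m₃ = 0) :
    ∃ u t : R₆, a = u * X 4 + t * (X 2 ^ 2 - X 4) ∧ b = -(u * X 2 + t * X 1 ^ 2) ∧
      c = u * X 1 ^ 2 + t * X 3 := by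
  have hB : X 2 ^ 2 ∣ substZero 4 a := by
    have h₄ := congrArg (substZero 4) h
    simp only [m₁, m₂, m₃, map_add, map_mul, map_sub, map_pow, substZero_X, Fin.reduceEq,
      ↓reduceIte, sub_zero, mul_zero, map_zero] at h₄
    have hm₁ : ¬ X 2 ∣ (X 1 ^ 4 - X 2 * X 3 : R₆) :=
      not_dvd_of_map_eq_zero (aeval (fun i : Fin 6 => if i = 1 then (1 : ℂ) else 0))
        (by simp) (by simp)
    exact X_prime.pow_dvd_of_dvd_mul_right 2 hm₁
      ⟨-(substZero 4 b * X 1 ^ 2 + substZero 4 c * X 2), by linear_combination h₄⟩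
  obtain ⟨t, ht⟩ := hB
  obtain ⟨v, hv⟩ := X_dvd_sub_substZero 4 a
  obtain ⟨l, hb, hc⟩ := prime_m₂.exists_of_mul_add_mul_eq_zero not_m₂_dvd_m₃
    (b := b + (v + t) * X 2 + t * X 1 ^ 2) (c := c - (v + t) * X 1 ^ 2 - t * X 3)
    (by simp only [m₁, m₂, m₃] at h ⊢; linear_combination h - (X 1 ^ 4 - X 2 * X 3) * (hv + ht))
  simp only [m₂, m₃] at hb hc
  -- The Koszul syzygy `(0, -m₃, m₂)` is `(B² - D)` times the first row syzygy minus `D` times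
  -- the second.
  refine ⟨v + t + l * (X 2 ^ 2 - X 4), t - l * X 4, ?_, ?_, ?_⟩
  · linear_combination hv + ht
  · linear_combination hb
  · linear_combination hc

theorem exists_syzygy_lift (a : Fin 3 → R₆) (ha : X 0 ∣ ∑ i, a i * ![n₁, n₂, n₃] i) :
    ∃ b : Fin 3 → R₆, ∑ i, b i * ![n₁, n₂, n₃] i = 0 ∧ ∀ i, X 0 ∣ a i - b i := by
  obtain ⟨q, hq⟩ := ha
  have h₀ := congrArg (substZero 0) hq
  simp only [Fin.sum_univ_three, Matrix.cons_val_zero, Matrix.cons_val_one, Matrix.cons_val_two,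
    Matrix.head_cons, Matrix.tail_cons, map_add, map_mul, substZero_n₁, substZero_n₂, substZero_n₃,
    substZero_X, if_pos, zero_mul] at h₀
  obtain ⟨u, t, h₁, h₂, h₃⟩ := exists_eq_rows_of_syzygy h₀
  -- `u` times the row syzygy of `(A² + s⁵E⁵, B, D)` plus `t` times that of `(C, A², B² - D)`.
  refine ⟨![u * X 4 + t * (X 2 ^ 2 - X 4), -(u * X 2 + t * X 1 ^ 2),
    u * (X 1 ^ 2 + X 0 ^ 5 * X 5 ^ 5) + t * X 3], ?_, ?_⟩
  · simp only [Fin.sum_univ_three, Matrix.cons_val_zero, Matrix.cons_val_one, Matrix.cons_val,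
      n₁, n₂, n₃]
    ring
  · intro i
    fin_cases i <;> simp only [Fin.reduceFinMk, Matrix.cons_val]
    · simpa [← h₁] using X_dvd_sub_substZero 0 (a 0)
    · simpa [← h₂] using X_dvd_sub_substZero 0 (a 1)
    · obtain ⟨r, hr⟩ := X_dvd_sub_substZero 0 (a 2)
      exact ⟨r - u * X 0 ^ 4 * X 5 ^ 5, by linear_combination hr + h₃⟩

end DeterminantalSE

open DeterminantalSE in
theorem stmt_13 :
    Ideal.Quotient.mk I_sE (X 0) ∈
      nonZeroDivisors (MvPolynomial (Fin 6) ℂ ⧸ I_sE) := by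
  have hI : I_sE = Ideal.span (Set.range ![n₁, n₂, n₃]) := by
    rw [I_sE, Matrix.range_cons, Matrix.range_cons, Matrix.range_cons, Matrix.range_empty,
      Set.union_empty, Set.singleton_union, Set.singleton_union]
  rw [hI]
  exact Ideal.Quotient.mk_mem_nonZeroDivisors_of_lift_syzygies
    (mem_nonZeroDivisors_of_ne_zero (X_ne_zero 0)) _ exists_syzygy_lift
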